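/- Let Ω be a Cantor group, T : Ω → Ω a minimal translation, and f ∈ C(Ω,ℝ). For each ω ∈ Ω define V_ω ∈ ℓ^∞(ℤ) by V_ω(n) = f(Tⁿω). Then for every ω ∈ Ω the sequence V_ω is limit-periodic, i.e., it lies in the closure (with respect to the supremum norm on bounded two-sided real sequences) of the set of periodic sequences, and the closure of the shift orbit {S^k V_ω : k ∈ ℤ} in ℓ^∞(ℤ) equals {V_{ω̃} : ω̃ ∈ Ω}, where S is the shift (SV)(n) = V(n+1). -/

import Mathlib

/-!
The map `ω ↦ V_ω` is continuous from `Ω` to `ℓ^∞(ℤ)` (translation acts continuously on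
`C(Ω, ℝ)`, i.e. `f` is uniformly continuous) and it intertwines translation by `m • α` with the
shift by `m`. Given `ε > 0`, continuity at `ω` yields a neighbourhood `U` of `0` with
`‖V_{ω+t} - V_ω‖ < ε` for `t ∈ U`; since `Ω` is profinite, `U` contains an open subgroup `K`, of
finite index `p`, so `pℤ • α ⊆ K` and the `p`-periodic sequence `n ↦ V_ω (n % p)` is `ε`-close
to `V_ω`. The shift orbit of `V_ω` is the image of the dense orbit of `ω` under the continuous map
`V` on the compact space `Ω`, so its closure is the whole range of `V`.
-/

open ENNReal

section Sampling

variable {ι X E : Type*} [TopologicalSpace X] [CompactSpace X] [NormedAddCommGroup E]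

def ContinuousMap.sampleLp (s : ι → X) (h : C(X, E)) : lp (fun _ : ι => E) ∞ :=
  ⟨fun i => h (s i), memℓp_infty ⟨‖h‖, by rintro _ ⟨i, rfl⟩; exact h.norm_coe_le_norm _⟩⟩

theorem ContinuousMap.lipschitzWith_sampleLp (s : ι → X) :
    LipschitzWith 1 (fun h : C(X, E) => h.sampleLp s) := by
  refine LipschitzWith.of_dist_le_mul fun h₁ h₂ => ?_
  rw [NNReal.coe_one, one_mul, dist_eq_norm, dist_eq_norm]
  refine lp.norm_le_of_forall_le (norm_nonneg _) fun i => ?_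
  exact (h₁ - h₂).norm_coe_le_norm (s i)

end Sampling

theorem ContinuousMap.continuous_comp_addLeft {G E : Type*} [TopologicalSpace G] [Add G]
    [ContinuousAdd G] [TopologicalSpace E] (f : C(G, E)) :
    Continuous fun g : G => f.comp (ContinuousMap.addLeft g) :=
  (f.comp ⟨fun p : G × G => p.1 + p.2, continuous_add⟩).curry.continuous

section ShiftEquivariant

variable {Ω E : Type*} [TopologicalSpace Ω] [AddCommGroup Ω] [NormedAddCommGroup E]
  {V : Ω → lp (fun _ : ℤ => E) ∞} {α : Ω}

theorem mem_closure_periodic_of_shift [IsTopologicalAddGroup Ω] [CompactSpace Ω]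
    [TotallyDisconnectedSpace Ω]
    (hV : Continuous V) (hshift : ∀ ω (m n : ℤ), V (ω + m • α) n = V ω (n + m)) (ω : Ω) :
    V ω ∈ closure {W : lp (fun _ : ℤ => E) ∞ | ∃ p : ℕ, 1 ≤ p ∧ ∀ n : ℤ, W (n + p) = W n} := by
  refine Metric.mem_closure_iff.mpr fun ε hε => ?_
  have hnear : (fun t => V (ω + t)) ⁻¹' Metric.ball (V ω) (ε / 2) ∈ nhds (0 : Ω) := by
    apply (hV.comp (continuous_const_add ω)).continuousAt.preimage_mem_nhds
    simpa using Metric.ball_mem_nhds (V ω) (half_pos hε)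
  obtain ⟨U, hUsub, hUopen, hU0⟩ := mem_nhds_iff.mp hnear
  obtain ⟨K, hKU⟩ := ProfiniteGrp.exist_openNormalAddSubgroup_sub_open_nhds_of_zero hUopen hU0
  set p := K.toAddSubgroup.index
  have hp0 : p ≠ 0 := AddSubgroup.index_ne_zero_of_finite
  have hpα : p • α ∈ K := AddSubgroup.nsmul_index_mem _ α
  set W : lp (fun _ : ℤ => E) ∞ := ⟨fun n => V ω (n % p), memℓp_infty ⟨‖V ω‖, by
    rintro _ ⟨n, rfl⟩; exact lp.norm_apply_le_norm ENNReal.top_ne_zero _ _⟩⟩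
  refine ⟨W, ⟨p, Nat.one_le_iff_ne_zero.mpr hp0, fun n => ?_⟩, ?_⟩
  · show V ω ((n + p) % p) = V ω (n % p)
    rw [Int.add_emod_right]
  · rw [dist_eq_norm]
    refine (lp.norm_le_of_forall_le (half_pos hε).le fun n => ?_).trans_lt (half_lt_self hε)
    let m := n - n % p
    have hm : m = n / p * p := by
      simp only [m, Int.emod_def n p]
      ring
    have hmK : m • α ∈ K := by
      rw [hm, mul_zsmul, natCast_zsmul]
      exact K.zsmul_mem hpα _
    calc ‖(V ω - W) n‖ = ‖(V (ω + m • α) - V ω) (n % p)‖ := by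
          simp only [lp.coeFn_sub, Pi.sub_apply, hshift, m, add_sub_cancel, W]
      _ ≤ ‖V (ω + m • α) - V ω‖ := lp.norm_apply_le_norm ENNReal.top_ne_zero _ _
      _ ≤ ε / 2 := (mem_ball_iff_norm.mp (hUsub (hKU hmK))).le

theorem closure_shift_orbit_eq_range [CompactSpace Ω]
    (hV : Continuous V) (hshift : ∀ ω (m n : ℤ), V (ω + m • α) n = V ω (n + m)) {ω : Ω}
    (hω : Dense {ω' : Ω | ∃ n : ℤ, ω' = ω + n • α}) :
    closure {W : lp (fun _ : ℤ => E) ∞ | ∃ k : ℤ, ∀ n : ℤ, W n = V ω (n + k)} = Set.range V := by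
  have horbit : {W : lp (fun _ : ℤ => E) ∞ | ∃ k : ℤ, ∀ n : ℤ, W n = V ω (n + k)} =
      V '' {ω' : Ω | ∃ n : ℤ, ω' = ω + n • α} := by
    ext W
    constructor
    · rintro ⟨k, hk⟩
      exact ⟨ω + k • α, ⟨k, rfl⟩, lp.ext <| funext fun n => (hshift ω k n).trans (hk n).symm⟩
    · rintro ⟨_, ⟨k, rfl⟩, rfl⟩
      exact ⟨k, hshift ω k⟩
  rw [horbit, hV.isClosedMap.closure_image_eq_of_continuous hV, hω.closure_eq, Set.image_univ]

end ShiftEquivariant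

section OrbitSeq

variable {G E : Type*} [TopologicalSpace G] [AddCommGroup G] [ContinuousAdd G] [CompactSpace G]
  [NormedAddCommGroup E]

def ContinuousMap.orbitSeq (f : C(G, E)) (α ω : G) : lp (fun _ : ℤ => E) ∞ :=
  (f.comp (ContinuousMap.addLeft ω)).sampleLp (· • α)

@[simp]
theorem ContinuousMap.orbitSeq_apply (f : C(G, E)) (α ω : G) (n : ℤ) :
    f.orbitSeq α ω n = f (ω + n • α) :=
  rfl

theorem ContinuousMap.orbitSeq_add_zsmul_apply (f : C(G, E)) (α ω : G) (m n : ℤ) :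
    f.orbitSeq α (ω + m • α) n = f.orbitSeq α ω (n + m) := by
  simp only [orbitSeq_apply, add_zsmul, add_assoc, add_comm (m • α)]

theorem ContinuousMap.continuous_orbitSeq (f : C(G, E)) (α : G) : Continuous (f.orbitSeq α) :=
  (lipschitzWith_sampleLp _).continuous.comp f.continuous_comp_addLeft

end OrbitSeq

theorem statement18
    (Ω : Type*) [TopologicalSpace Ω] [AddCommGroup Ω] [IsTopologicalAddGroup Ω]
    [CompactSpace Ω] [TotallyDisconnectedSpace Ω]
    (α : Ω)
    (hMin : ∀ ω : Ω, Dense {ω' : Ω | ∃ n : ℤ, ω' = ω + n • α})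
    (f : C(Ω, ℝ)) :
    ∃ V : Ω → lp (fun _ : ℤ => ℝ) ∞,
      (∀ (ω : Ω) (n : ℤ), V ω n = f (ω + n • α)) ∧
      (∀ ω : Ω, V ω ∈ closure {W : lp (fun _ : ℤ => ℝ) ∞ |
          ∃ p : ℕ, 1 ≤ p ∧ ∀ n : ℤ, W (n + p) = W n}) ∧
      (∀ ω : Ω, closure {W : lp (fun _ : ℤ => ℝ) ∞ |
          ∃ k : ℤ, ∀ n : ℤ, W n = V ω (n + k)} = Set.range V) :=
  ⟨f.orbitSeq α, f.orbitSeq_apply α,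
    mem_closure_periodic_of_shift (f.continuous_orbitSeq α) (f.orbitSeq_add_zsmul_apply α),
    fun ω => closure_shift_orbit_eq_range (f.continuous_orbitSeq α)
      (f.orbitSeq_add_zsmul_apply α) (hMin ω)⟩
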